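/- arXiv:1403.3320 — 4 statements merged into one kernel-verified Lean document; each statement's English description precedes it below -/
import Mathlib

section
/- For every real b > 0, the limit as a → 0⁺ of a·∫₀^∞ t^(−2)·exp(−a/t − b·t) dt equals 1. -/
/-!
The substitution `s = a / t` turns `a * ∫₀^∞ exp (-a / t - b t) / t² dt` into
`∫₀^∞ exp (-s - a b / s) ds`, which tends to `∫₀^∞ exp (-s) ds = 1` by dominated convergence
with dominant `exp (-s)`.
-/

open Real Filter MeasureTheory Set Topology

theorem integral_Ioi_div_sq_smul_comp_div {E : Type*} [NormedAddCommGroup E] [NormedSpace ℝ E]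
    (g : ℝ → E) {a : ℝ} (ha : 0 < a) :
    ∫ t in Ioi 0, (a / t ^ 2) • g (a / t) = ∫ s in Ioi 0, g s := by
  have himage : (a / ·) '' Ioi 0 = Ioi (0 : ℝ) := by
    ext s
    refine ⟨?_, fun hs => ⟨a / s, div_pos ha hs, div_div_cancel₀ ha.ne'⟩⟩
    rintro ⟨t, ht, rfl⟩
    exact div_pos ha ht
  have hderiv : ∀ t ∈ Ioi (0 : ℝ), HasDerivWithinAt (a / ·) (-(a / t ^ 2)) (Ioi 0) t := by
    intro t ht
    simpa [div_eq_mul_inv] using ((hasDerivAt_inv (ne_of_gt ht)).const_mul a).hasDerivWithinAt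
  have hinj : InjOn (a / ·) (Ioi (0 : ℝ)) := fun x _ y _ h => by
    simpa [div_div_cancel₀ ha.ne'] using congrArg (a / ·) h
  conv_rhs =>
    rw [← himage, integral_image_eq_integral_abs_deriv_smul measurableSet_Ioi hderiv hinj]
  refine setIntegral_congr_fun measurableSet_Ioi fun t _ => ?_
  rw [abs_neg, abs_of_nonneg (by positivity : (0 : ℝ) ≤ a / t ^ 2)]

theorem mul_integral_exp_div_sq_eq (b : ℝ) {a : ℝ} (ha : 0 < a) :
    a * ∫ t in Ioi 0, exp (-a / t - b * t) / t ^ 2 = ∫ s in Ioi 0, exp (-s - a * b / s) := by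
  rw [← integral_Ioi_div_sq_smul_comp_div (fun s => exp (-s - a * b / s)) ha,
    ← integral_const_mul]
  refine setIntegral_congr_fun measurableSet_Ioi fun t (ht : 0 < t) => ?_
  have hbt : a * b / (a / t) = b * t := by field_simp
  rw [smul_eq_mul, hbt, neg_div]
  ring

theorem tendsto_integral_exp_neg_sub_div :
    Tendsto (fun c : ℝ => ∫ s in Ioi 0, exp (-s - c / s)) (𝓝[≥] 0) (𝓝 1) := by
  rw [← integral_exp_neg_Ioi_zero]
  refine tendsto_integral_filter_of_dominated_convergence (fun s => exp (-s)) ?_ ?_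
    (exp_neg_integrableOn_Ioi 0 one_pos |>.congr_fun (fun s _ => by simp) measurableSet_Ioi) ?_
  · exact Eventually.of_forall fun c => by fun_prop
  · filter_upwards [self_mem_nhdsWithin] with c (hc : 0 ≤ c)
    refine (ae_restrict_iff' measurableSet_Ioi).2 (Eventually.of_forall fun s (hs : 0 < s) => ?_)
    rw [norm_of_nonneg (exp_pos _).le, exp_le_exp]
    linarith [div_nonneg hc hs.le]
  · refine (ae_restrict_iff' measurableSet_Ioi).2 (Eventually.of_forall fun s _ => ?_)
    have hcont : ContinuousAt (fun c : ℝ => exp (-s - c / s)) 0 := by fun_prop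
    simpa using hcont.tendsto.mono_left nhdsWithin_le_nhds

/-- `a * ∫₀^∞ t⁻² exp(-a/t - b t) dt → 1` as `a → 0⁺`. -/
theorem tendsto_mul_integral_inv_sq_exp (b : ℝ) (hb : 0 < b) :
    Tendsto (fun a : ℝ => a * ∫ t in Set.Ioi (0:ℝ), Real.exp (-a / t - b * t) / t ^ 2)
      (nhdsWithin 0 (Set.Ioi 0)) (nhds 1) := by
  have hab : Tendsto (fun a : ℝ => a * b) (𝓝[>] 0) (𝓝[≥] 0) := by
    refine tendsto_nhdsWithin_of_tendsto_nhds_of_eventually_within _ ?_ ?_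
    · exact ((continuous_id.mul continuous_const).tendsto' 0 0 (zero_mul b)).mono_left
        nhdsWithin_le_nhds
    · filter_upwards [self_mem_nhdsWithin] with a (ha : 0 < a)
      exact mul_nonneg ha.le hb.le
  refine (tendsto_integral_exp_neg_sub_div.comp hab).congr' ?_
  filter_upwards [self_mem_nhdsWithin] with a ha
  exact (mul_integral_exp_div_sq_eq b ha).symm
end

section
/- Let p : ℝ → ℝ be continuous and let F, G : ℝ → ℝ be twice continuously differentiable with F'' = p·F and G'' = p·G. Set W = F(0)·G'(0) − G(0)·F'(0) and assume W ≠ 0. Define k : ℝ → ℝ by k(θ) = G(0)·F(θ)/W for θ ≥ 0 and k(θ) = F(0)·G(θ)/W for θ ≤ 0 (the two formulas agree at θ = 0). Then for every smooth compactly supported function φ : ℝ → ℝ one has ∫_ℝ k(θ)·(p(θ)·φ(θ) − φ''(θ)) dθ = φ(0). -/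
open MeasureTheory

lemma sl_half_integral (p u φ : ℝ → ℝ) (hp : Continuous p)
    (hu : ContDiff ℝ 2 u) (hu'' : ∀ θ, deriv (deriv u) θ = p θ * u θ)
    (hφ : ContDiff ℝ 2 φ) (a b : ℝ) :
    ∫ θ in a..b, u θ * (p θ * φ θ - deriv (deriv φ) θ)
      = (deriv u b * φ b - u b * deriv φ b) - (deriv u a * φ a - u a * deriv φ a) := by
  have h2 : (2 : WithTop ℕ∞) = 1 + 1 := by norm_num
  have hud : Differentiable ℝ u := hu.differentiable (by norm_num)
  have hu1 : ContDiff ℝ 1 (deriv u) := (contDiff_succ_iff_deriv.mp (h2 ▸ hu)).2.2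
  have hu'd : Differentiable ℝ (deriv u) := hu1.differentiable one_ne_zero
  have hφd : Differentiable ℝ φ := hφ.differentiable (by norm_num)
  have hφ1 : ContDiff ℝ 1 (deriv φ) := (contDiff_succ_iff_deriv.mp (h2 ▸ hφ)).2.2
  have hφ'd : Differentiable ℝ (deriv φ) := hφ1.differentiable one_ne_zero
  have hφ''c : Continuous (deriv (deriv φ)) :=
    (contDiff_one_iff_deriv.mp hφ1).2
  apply intervalIntegral.integral_eq_sub_of_hasDerivAt
  · intro x _
    have h1 : HasDerivAt u (deriv u x) x := (hud x).hasDerivAt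
    have h2 : HasDerivAt (deriv u) (p x * u x) x := hu'' x ▸ (hu'd x).hasDerivAt
    have h3 : HasDerivAt φ (deriv φ x) x := (hφd x).hasDerivAt
    have h4 : HasDerivAt (deriv φ) (deriv (deriv φ) x) x := (hφ'd x).hasDerivAt
    have := (h2.mul h3).sub (h1.mul h4)
    convert this using 1
    · rfl
    ring
  · exact (hud.continuous.mul ((hp.mul hφ.continuous).sub hφ''c)).intervalIntegrable _ _

/-- Sturm–Liouville continuous fit: if `F'' = p F`, `G'' = p G`, with nonzero Wronskian
`W = F(0)G'(0) - G(0)F'(0)`, then `k = G(0)F/W` on `θ ≥ 0`, `k = F(0)G/W` on `θ ≤ 0`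
is a distributional Green's function: `∫ k (p φ - φ'') = φ(0)`. -/
theorem sturm_liouville_green_function
    (p F G : ℝ → ℝ) (hp : Continuous p)
    (hF : ContDiff ℝ 2 F) (hG : ContDiff ℝ 2 G)
    (hF'' : ∀ θ, deriv (deriv F) θ = p θ * F θ)
    (hG'' : ∀ θ, deriv (deriv G) θ = p θ * G θ)
    (W : ℝ) (hW : W = F 0 * deriv G 0 - G 0 * deriv F 0) (hW0 : W ≠ 0)
    (k : ℝ → ℝ)
    (hkpos : ∀ θ : ℝ, 0 ≤ θ → k θ = G 0 * F θ / W)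
    (hkneg : ∀ θ : ℝ, θ ≤ 0 → k θ = F 0 * G θ / W)
    (φ : ℝ → ℝ) (hφ : ContDiff ℝ (⊤ : ℕ∞) φ) (hsupp : HasCompactSupport φ) :
    ∫ θ : ℝ, k θ * (p θ * φ θ - deriv (deriv φ) θ) = φ 0 := by
  have hφ2 : ContDiff ℝ 2 φ := hφ.of_le (WithTop.coe_le_coe.mpr le_top)
  have h2 : (2 : WithTop ℕ∞) = 1 + 1 := by norm_num
  have hφd : Differentiable ℝ φ := hφ2.differentiable (by norm_num)
  have hφ1 : ContDiff ℝ 1 (deriv φ) := (contDiff_succ_iff_deriv.mp (h2 ▸ hφ2)).2.2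
  have hφ''c : Continuous (deriv (deriv φ)) := (contDiff_one_iff_deriv.mp hφ1).2
  -- continuity of k
  have hkeq : k = fun x => if x ≤ 0 then F 0 * G x / W else G 0 * F x / W := by
    funext x
    rcases le_or_gt x 0 with h | h
    · simp [h, hkneg x h]
    · simp [not_le.2 h, hkpos x h.le]
  have hk : Continuous k := by
    rw [hkeq]
    refine Continuous.if_le ?_ ?_ continuous_id continuous_const ?_
    · exact (continuous_const.mul hG.continuous).div_const _
    · exact (continuous_const.mul hF.continuous).div_const _
    · rintro x rfl; ring
  have hfc : Continuous fun θ => k θ * (p θ * φ θ - deriv (deriv φ) θ) :=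
    hk.mul ((hp.mul hφ.continuous).sub hφ''c)
  -- choose b covering the support
  obtain ⟨r, hr⟩ := (Metric.isBounded_iff_subset_closedBall 0).mp hsupp.isBounded
  set b : ℝ := |r| + 1 with hb
  have hb0 : 0 < b := by positivity
  have houtside : ∀ x : ℝ, b ≤ |x| → φ x = 0 ∧ deriv φ x = 0 ∧ deriv (deriv φ) x = 0 := by
    intro x hx
    have hxs : x ∉ tsupport φ := by
      intro hmem
      have := hr hmem
      rw [Real.closedBall_eq_Icc] at this
      have : |x| ≤ r := abs_le.mpr ⟨by linarith [this.1], by linarith [this.2]⟩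
      have : r ≤ |r| := le_abs_self r
      linarith
    have h1 : φ x = 0 := image_eq_zero_of_notMem_tsupport hxs
    have hx' : x ∉ tsupport (deriv φ) := fun h => hxs (closure_minimal support_deriv_subset (isClosed_tsupport φ) h)
    have h2 : deriv φ x = 0 := image_eq_zero_of_notMem_tsupport hx'
    have hx'' : x ∉ tsupport (deriv (deriv φ)) := fun h => hx' (closure_minimal support_deriv_subset (isClosed_tsupport _) h)
    exact ⟨h1, h2, image_eq_zero_of_notMem_tsupport hx''⟩
  -- reduce to an interval integral
  have hred : (∫ θ : ℝ, k θ * (p θ * φ θ - deriv (deriv φ) θ))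
      = ∫ θ in (-b)..b, k θ * (p θ * φ θ - deriv (deriv φ) θ) := by
    rw [intervalIntegral.integral_of_le (by linarith : -b ≤ b)]
    rw [setIntegral_eq_integral_of_forall_compl_eq_zero]
    intro x hx
    have : b ≤ |x| := by
      simp only [Set.mem_Ioc, not_and_or, not_lt, not_le] at hx
      rcases hx with h | h
      · rw [abs_of_nonpos (by linarith)]; linarith
      · rw [abs_of_pos (by linarith)]; linarith
    obtain ⟨h1, _, h3⟩ := houtside x this
    rw [h1, h3]; ring
  -- split at 0
  have hint : ∀ a c : ℝ, IntervalIntegrable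
      (fun θ => k θ * (p θ * φ θ - deriv (deriv φ) θ)) volume a c :=
    fun a c => hfc.intervalIntegrable a c
  have hsplit : (∫ θ in (-b)..b, k θ * (p θ * φ θ - deriv (deriv φ) θ))
      = (∫ θ in (-b)..(0:ℝ), k θ * (p θ * φ θ - deriv (deriv φ) θ))
        + ∫ θ in (0:ℝ)..b, k θ * (p θ * φ θ - deriv (deriv φ) θ) :=
    (intervalIntegral.integral_add_adjacent_intervals (hint _ _) (hint _ _)).symm
  -- the two half computations
  set uP : ℝ → ℝ := fun θ => G 0 / W * F θ with huPdef
  set uM : ℝ → ℝ := fun θ => F 0 / W * G θ with huMdef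
  have hFd : Differentiable ℝ F := hF.differentiable (by norm_num)
  have hGd : Differentiable ℝ G := hG.differentiable (by norm_num)
  have huPd : ∀ θ, deriv uP θ = G 0 / W * deriv F θ := fun θ =>
    deriv_const_mul _ (hFd θ)
  have huMd : ∀ θ, deriv uM θ = F 0 / W * deriv G θ := fun θ =>
    deriv_const_mul _ (hGd θ)
  have huP'' : ∀ θ, deriv (deriv uP) θ = p θ * uP θ := by
    intro θ
    have : deriv uP = fun θ => G 0 / W * deriv F θ := funext huPd
    rw [this, deriv_const_mul _ ((((contDiff_succ_iff_deriv.mp (h2 ▸ hF)).2.2).differentiable one_ne_zero) θ), hF'' θ]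
    simp only [huPdef]; ring
  have huM'' : ∀ θ, deriv (deriv uM) θ = p θ * uM θ := by
    intro θ
    have : deriv uM = fun θ => F 0 / W * deriv G θ := funext huMd
    rw [this, deriv_const_mul _ ((((contDiff_succ_iff_deriv.mp (h2 ▸ hG)).2.2).differentiable one_ne_zero) θ), hG'' θ]
    simp only [huMdef]; ring
  have huPc : ContDiff ℝ 2 uP := contDiff_const.mul hF
  have huMc : ContDiff ℝ 2 uM := contDiff_const.mul hG
  have hbout := houtside b (by rw [abs_of_pos hb0])
  have hbout' := houtside (-b) (by rw [abs_of_neg (by linarith)]; simp)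
  have hpos : (∫ θ in (0:ℝ)..b, k θ * (p θ * φ θ - deriv (deriv φ) θ))
      = -(deriv uP 0 * φ 0 - uP 0 * deriv φ 0) := by
    have hcongr : (∫ θ in (0:ℝ)..b, k θ * (p θ * φ θ - deriv (deriv φ) θ))
        = ∫ θ in (0:ℝ)..b, uP θ * (p θ * φ θ - deriv (deriv φ) θ) := by
      apply intervalIntegral.integral_congr
      intro x hx
      rw [Set.uIcc_of_le (by linarith : (0:ℝ) ≤ b)] at hx
      show k x * (p x * φ x - deriv (deriv φ) x) = uP x * (p x * φ x - deriv (deriv φ) x)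
      rw [hkpos x hx.1]
      simp only [huPdef]; ring_nf
    rw [hcongr, sl_half_integral p uP φ hp huPc huP'' hφ2, hbout.1, hbout.2.1]
    ring
  have hneg : (∫ θ in (-b)..(0:ℝ), k θ * (p θ * φ θ - deriv (deriv φ) θ))
      = deriv uM 0 * φ 0 - uM 0 * deriv φ 0 := by
    have hcongr : (∫ θ in (-b)..(0:ℝ), k θ * (p θ * φ θ - deriv (deriv φ) θ))
        = ∫ θ in (-b)..(0:ℝ), uM θ * (p θ * φ θ - deriv (deriv φ) θ) := by
      apply intervalIntegral.integral_congr
      intro x hx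
      rw [Set.uIcc_of_le (by linarith : -b ≤ (0:ℝ))] at hx
      show k x * (p x * φ x - deriv (deriv φ) x) = uM x * (p x * φ x - deriv (deriv φ) x)
      rw [hkneg x hx.2]
      simp only [huMdef]; ring_nf
    rw [hcongr, sl_half_integral p uM φ hp huMc huM'' hφ2, hbout'.1, hbout'.2.1]
    ring
  rw [hred, hsplit, hpos, hneg, huPd, huMd]
  simp only [huPdef, huMdef]
  field_simp
  rw [hW] at *
  ring
end

section
/- For every λ > 0 and every θ ∈ [−π, π], the series Σ_{n ∈ ℤ} exp(−√λ·|θ + 2πn|) converges absolutely and its sum equals cosh(√λ·(π − |θ|)) / sinh(π·√λ). -/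
/-!
For `0 ≤ θ ≤ 2c` the points `θ + 2cn` are nonnegative exactly for `n ≥ 0`, so the series splits
into two geometric series with ratio `exp (-2ac)`, summing to
`(exp (-aθ) + exp (-a(2c - θ))) / (1 - exp (-2ac))`; multiplying numerator and denominator by
`exp (ac)` turns this into `cosh (a(c - θ)) / sinh (ca)`. Negative `θ` follow by the
substitution `n ↦ -n`.
-/

open Real

theorem hasSum_exp_neg_mul_add_nat_mul {a p : ℝ} (ha : 0 < a) (hp : 0 < p) (x : ℝ) :
    HasSum (fun n : ℕ => exp (-a * (x + p * n))) (exp (-a * x) / (1 - exp (-a * p))) := by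
  have hq : exp (-a * p) < 1 := exp_lt_one_iff.2 (by nlinarith)
  have h_geom :
      (fun n : ℕ => exp (-a * (x + p * n))) = fun n => exp (-a * x) * exp (-a * p) ^ n := by
    ext n
    rw [← exp_nat_mul, ← exp_add]
    ring_nf
  rw [h_geom, div_eq_mul_inv]
  exact (hasSum_geometric_of_lt_one (exp_nonneg _) hq).mul_left _

theorem cosh_div_sinh_eq (x b : ℝ) :
    cosh x / sinh b = (exp (x - b) + exp (-x - b)) / (1 - exp (-2 * b)) := by
  rw [cosh_eq, sinh_eq, div_div_div_cancel_right₀ two_ne_zero,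
    ← mul_div_mul_right _ _ (exp_ne_zero (-b))]
  simp only [add_mul, sub_mul, ← exp_add]
  ring_nf
  simp

theorem hasSum_exp_neg_mul_abs_add_int_mul_of_nonneg {a c θ : ℝ} (ha : 0 < a) (hc : 0 < c)
    (hθ₀ : 0 ≤ θ) (hθc : θ ≤ 2 * c) :
    HasSum (fun n : ℤ => exp (-a * |θ + 2 * c * n|)) (cosh (a * (c - θ)) / sinh (c * a)) := by
  have hp : 0 < 2 * c := by positivity
  have h_nonneg : HasSum (fun n : ℕ => exp (-a * |θ + 2 * c * (n : ℤ)|))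
      (exp (-a * θ) / (1 - exp (-a * (2 * c)))) := by
    convert hasSum_exp_neg_mul_add_nat_mul ha hp θ using 3 with n
    rw [Int.cast_natCast, abs_of_nonneg (by positivity)]
  have h_neg : HasSum (fun n : ℕ => exp (-a * |θ + 2 * c * ((-(n + 1) : ℤ) : ℝ)|))
      (exp (-a * (2 * c - θ)) / (1 - exp (-a * (2 * c)))) := by
    convert hasSum_exp_neg_mul_add_nat_mul ha hp (2 * c - θ) using 3 with n
    push_cast
    rw [abs_of_nonpos (by nlinarith [n.cast_nonneg (α := ℝ)])]
    ring
  convert HasSum.of_nat_of_neg_add_one (f := fun n : ℤ => exp (-a * |θ + 2 * c * n|))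
    h_nonneg h_neg using 1
  rw [cosh_div_sinh_eq, add_div]
  congr 3 <;> ring_nf

theorem hasSum_exp_neg_mul_abs_add_int_mul {a c θ : ℝ} (ha : 0 < a) (hc : 0 < c)
    (hθ : |θ| ≤ 2 * c) :
    HasSum (fun n : ℤ => exp (-a * |θ + 2 * c * n|)) (cosh (a * (c - |θ|)) / sinh (c * a)) := by
  obtain hθ₀ | hθ₀ := le_total 0 θ
  · rw [abs_of_nonneg hθ₀] at hθ ⊢
    exact hasSum_exp_neg_mul_abs_add_int_mul_of_nonneg ha hc hθ₀ hθ
  · rw [abs_of_nonpos hθ₀] at hθ ⊢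
    rw [← (Equiv.neg ℤ).hasSum_iff]
    convert hasSum_exp_neg_mul_abs_add_int_mul_of_nonneg ha hc (neg_nonneg.2 hθ₀) hθ using 3 with n
    rw [← abs_neg]
    simp only [Function.comp_apply, Equiv.neg_apply, Int.cast_neg]
    ring_nf

/-- Periodization: `Σ_{n ∈ ℤ} exp(-√λ |θ + 2πn|) = cosh(√λ (π - |θ|)) / sinh(π √λ)`. -/
theorem periodized_exponential_sum (l : ℝ) (hl : 0 < l)
    (θ : ℝ) (hθ : θ ∈ Set.Icc (-Real.pi) Real.pi) :
    HasSum (fun n : ℤ => Real.exp (-Real.sqrt l * |θ + 2 * Real.pi * n|))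
      (Real.cosh (Real.sqrt l * (Real.pi - |θ|)) / Real.sinh (Real.pi * Real.sqrt l)) :=
  hasSum_exp_neg_mul_abs_add_int_mul (sqrt_pos.2 hl) pi_pos
    ((abs_le.2 hθ).trans (by linarith [pi_pos]))
end

section
/- Let s > 0, a > 0, C ≥ 0, and let h : ℝ² → ℂ be a measurable function such that |h(ω)| ≤ C/‖ω‖² for all ω with ‖ω‖ ≥ a. Then for every x ∈ ℝ², the integral ∫_{ℝ² ∖ [−a,a]²} exp(−s‖ω‖²)·h(ω)·exp(i⟨ω, x⟩) dω satisfies |∫_{ℝ² ∖ [−a,a]²} exp(−s‖ω‖²)·h(ω)·exp(i⟨ω, x⟩) dω| ≤ π·C·∫_{s·a²}^∞ exp(−u)/u du. -/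
/-!
Off the square `[-a, a]²` one has `‖ω‖ ≥ a`, so the integrand is dominated by the radial function
`C e^{-s‖ω‖²} / ‖ω‖² 𝟙_{‖ω‖ ≥ a}`. Integrating this majorant over the whole plane in polar
coordinates gives `2π C ∫_a^∞ e^{-s r²} / r dr`, and the substitution `u = s r²` turns it into
`π C ∫_{s a²}^∞ e^{-u} / u du`.
-/

open MeasureTheory Real Set

theorem EuclideanSpace.lt_norm_of_notMem_pi_Icc {ι : Type*} [Fintype ι] {a : ℝ}
    {ω : EuclideanSpace ℝ ι} (hω : ω ∉ WithLp.ofLp ⁻¹' univ.pi fun _ : ι => Icc (-a) a) :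
    a < ‖ω‖ := by
  obtain ⟨i, hi⟩ : ∃ i, ¬ |ω i| ≤ a := by
    simpa only [mem_preimage, mem_univ_pi, mem_Icc, abs_le, not_forall] using hω
  exact (not_le.mp hi).trans_le (PiLp.norm_apply_le ω i)

noncomputable def gaussianTailProfile (s a r : ℝ) : ℝ :=
  (Ici a).indicator (fun r => exp (-s * r ^ 2) / r ^ 2) r

theorem gaussianTailProfile_nonneg (s a r : ℝ) : 0 ≤ gaussianTailProfile s a r :=
  indicator_nonneg (fun _ _ => by positivity) r

theorem measurable_gaussianTailProfile (s a : ℝ) : Measurable (gaussianTailProfile s a) :=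
  Measurable.indicator (by fun_prop) measurableSet_Ici

theorem gaussianTailProfile_le {s a : ℝ} (ha : 0 < a) (r : ℝ) :
    gaussianTailProfile s a r ≤ (a ^ 2)⁻¹ * exp (-s * r ^ 2) := by
  by_cases hr : r ∈ Ici a
  · rw [gaussianTailProfile, indicator_of_mem hr, div_eq_inv_mul]
    gcongr
    exact hr
  · rw [gaussianTailProfile, indicator_of_notMem hr]
    positivity

theorem integrable_exp_neg_mul_sq_norm {V : Type*} [NormedAddCommGroup V] [InnerProductSpace ℝ V]
    [FiniteDimensional ℝ V] [MeasurableSpace V] [BorelSpace V] {s : ℝ} (hs : 0 < s) :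
    Integrable (fun v : V => exp (-s * ‖v‖ ^ 2)) := by
  have := (GaussianFourier.integrable_cexp_neg_mul_sq_norm_add (V := V)
    (b := (s : ℂ)) (by simpa using hs) 0 0).norm
  simpa [Complex.norm_exp, ← Complex.ofReal_pow, ← Complex.ofReal_mul] using this

theorem integral_exp_neg_mul_sq_div_Ioi {s a : ℝ} (hs : 0 < s) (ha : 0 < a) :
    ∫ r in Ioi a, exp (-s * r ^ 2) / r = 2⁻¹ * ∫ u in Ioi (s * a ^ 2), exp (-u) / u := by
  have himage : (fun r => s * r ^ 2) '' Ioi a = Ioi (s * a ^ 2) := by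
    ext u
    constructor
    · rintro ⟨r, hr : a < r, rfl⟩
      show s * a ^ 2 < s * r ^ 2
      gcongr
    · intro (hu : s * a ^ 2 < u)
      have hus : 0 ≤ u / s := div_nonneg ((mul_nonneg hs.le (sq_nonneg a)).trans hu.le) hs.le
      refine ⟨√(u / s), ?_, ?_⟩
      · exact (lt_sqrt ha.le).mpr ((lt_div_iff₀' hs).mpr hu)
      · simp only [sq_sqrt hus, mul_div_cancel₀ _ hs.ne']
  have hderiv : ∀ r ∈ Ioi a, HasDerivWithinAt (fun r => s * r ^ 2) (2 * s * r) (Ioi a) r :=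
    fun r _ => ((hasDerivAt_pow 2 r).const_mul s).hasDerivWithinAt.congr_deriv (by push_cast; ring)
  have hinj : InjOn (fun r => s * r ^ 2) (Ioi a) := fun x (hx : a < x) y (hy : a < y) hxy =>
    (pow_left_inj₀ (ha.trans hx).le (ha.trans hy).le two_ne_zero).mp (mul_left_cancel₀ hs.ne' hxy)
  rw [← himage, integral_image_eq_integral_abs_deriv_smul measurableSet_Ioi hderiv hinj,
    ← integral_const_mul]
  refine setIntegral_congr_fun measurableSet_Ioi fun r (hr : a < r) => ?_
  have hr0 : 0 < r := ha.trans hr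
  rw [smul_eq_mul, abs_of_pos (by positivity), neg_mul]
  field_simp

theorem integrable_gaussianTailProfile_norm {V : Type*} [NormedAddCommGroup V]
    [InnerProductSpace ℝ V] [FiniteDimensional ℝ V] [MeasurableSpace V] [BorelSpace V]
    {s a : ℝ} (hs : 0 < s) (ha : 0 < a) :
    Integrable (fun v : V => gaussianTailProfile s a ‖v‖) := by
  refine ((integrable_exp_neg_mul_sq_norm hs).const_mul (a ^ 2)⁻¹).mono
    ((measurable_gaussianTailProfile s a).comp measurable_norm).aestronglyMeasurable ?_
  refine .of_forall fun v => ?_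
  rw [norm_of_nonneg (gaussianTailProfile_nonneg _ _ _), norm_of_nonneg (by positivity)]
  exact gaussianTailProfile_le ha _

theorem integral_gaussianTailProfile_norm_fin_two {s a : ℝ} (hs : 0 < s) (ha : 0 < a) :
    ∫ ω : EuclideanSpace ℝ (Fin 2), gaussianTailProfile s a ‖ω‖
      = π * ∫ u in Ioi (s * a ^ 2), exp (-u) / u := by
  have hradial : ∫ r in Ioi (0 : ℝ), r * gaussianTailProfile s a r
      = ∫ r in Ioi a, exp (-s * r ^ 2) / r := by
    have hprofile : EqOn (fun r => r * gaussianTailProfile s a r)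
        ((Ici a).indicator fun r => exp (-s * r ^ 2) / r) (Ioi 0) := by
      intro r (hr : 0 < r)
      by_cases hra : r ∈ Ici a
      · simp only [gaussianTailProfile, indicator_of_mem hra]
        field_simp
      · simp only [gaussianTailProfile, indicator_of_notMem hra, mul_zero]
    rw [setIntegral_congr_fun measurableSet_Ioi hprofile, setIntegral_indicator measurableSet_Ici,
      inter_eq_self_of_subset_right (Ici_subset_Ioi.mpr ha), integral_Ici_eq_integral_Ioi]
  rw [integral_fun_norm_addHaar, finrank_euclideanSpace_fin, measureReal_def,
    EuclideanSpace.volume_ball_fin_two]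
  simp only [Nat.reduceSub, pow_one, smul_eq_mul, hradial, integral_exp_neg_mul_sq_div_Ioi hs ha]
  norm_num [pi_nonneg]
  ring

theorem norm_gaussian_mul_mul_exp_inner_le {V : Type*} [NormedAddCommGroup V]
    [InnerProductSpace ℝ V] {s a C : ℝ} {h : V → ℂ} {ω : V} (x : V) (hω : a ≤ ‖ω‖)
    (hbound : ‖h ω‖ ≤ C / ‖ω‖ ^ 2) :
    ‖(exp (-s * ‖ω‖ ^ 2) : ℂ) * h ω * Complex.exp (Complex.I * ((inner ℝ ω x : ℝ) : ℂ))‖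
      ≤ C * gaussianTailProfile s a ‖ω‖ :=
  calc _ = exp (-s * ‖ω‖ ^ 2) * ‖h ω‖ := by
        rw [norm_mul, norm_mul, Complex.norm_exp_I_mul_ofReal, mul_one, Complex.norm_real,
          norm_of_nonneg (exp_nonneg _)]
    _ ≤ exp (-s * ‖ω‖ ^ 2) * (C / ‖ω‖ ^ 2) := by gcongr
    _ = C * gaussianTailProfile s a ‖ω‖ := by
        rw [gaussianTailProfile, indicator_of_mem (mem_Ici.mpr hω)]
        ring

theorem gaussian_tail_truncation_bound_general
    (s a C : ℝ) (hs : 0 < s) (ha : 0 < a) (hC : 0 ≤ C)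
    (h : EuclideanSpace ℝ (Fin 2) → ℂ)
    (hbound : ∀ ω : EuclideanSpace ℝ (Fin 2), a ≤ ‖ω‖ → ‖h ω‖ ≤ C / ‖ω‖ ^ 2)
    (x : EuclideanSpace ℝ (Fin 2)) :
    ‖(∫ ω : EuclideanSpace ℝ (Fin 2) in
            (WithLp.ofLp ⁻¹' (Set.univ.pi fun _ : Fin 2 => Set.Icc (-a) a) :
              Set (EuclideanSpace ℝ (Fin 2)))ᶜ,
          (Real.exp (-s * ‖ω‖ ^ 2) : ℂ) * h ω *
            Complex.exp (Complex.I * ((inner ℝ ω x : ℝ) : ℂ)))‖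
      ≤ Real.pi * C * ∫ u in Set.Ioi (s * a ^ 2), Real.exp (-u) / u := by
  set K : Set (EuclideanSpace ℝ (Fin 2)) := (WithLp.ofLp ⁻¹' univ.pi fun _ => Icc (-a) a)ᶜ
  have hK : MeasurableSet K :=
    ((MeasurableSet.univ_pi fun _ => measurableSet_Icc).preimage (WithLp.measurable_ofLp _ _)).compl
  have hmajorant : Integrable fun ω : EuclideanSpace ℝ (Fin 2) => C * gaussianTailProfile s a ‖ω‖ :=
    (integrable_gaussianTailProfile_norm hs ha).const_mul C
  have hpointwise : ∀ᵐ ω ∂volume.restrict K, ‖(exp (-s * ‖ω‖ ^ 2) : ℂ) * h ω *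
      Complex.exp (Complex.I * ((inner ℝ ω x : ℝ) : ℂ))‖ ≤ C * gaussianTailProfile s a ‖ω‖ := by
    refine (ae_restrict_iff' hK).mpr (.of_forall fun ω hω => ?_)
    have hωa : a ≤ ‖ω‖ := (EuclideanSpace.lt_norm_of_notMem_pi_Icc hω).le
    exact norm_gaussian_mul_mul_exp_inner_le x hωa (hbound ω hωa)
  calc _ ≤ ∫ ω in K, C * gaussianTailProfile s a ‖ω‖ :=
        norm_integral_le_of_norm_le hmajorant.integrableOn hpointwise
    _ ≤ ∫ ω, C * gaussianTailProfile s a ‖ω‖ :=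
        setIntegral_le_integral hmajorant
          (.of_forall fun _ => mul_nonneg hC (gaussianTailProfile_nonneg _ _ _))
    _ = π * C * ∫ u in Ioi (s * a ^ 2), exp (-u) / u := by
        rw [integral_const_mul, integral_gaussianTailProfile_norm_fin_two hs ha]
        ring

/-- Truncation error estimate: the tail of the inverse Fourier integral of a
Gaussian-regularized kernel decaying like `C/‖ω‖²` is bounded by
`π C ∫_{s a²}^∞ e^{-u}/u du`. -/
theorem gaussian_tail_truncation_bound
    (s a C : ℝ) (hs : 0 < s) (ha : 0 < a) (hC : 0 ≤ C)
    (h : EuclideanSpace ℝ (Fin 2) → ℂ) (hmeas : Measurable h)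
    (hbound : ∀ ω : EuclideanSpace ℝ (Fin 2), a ≤ ‖ω‖ → ‖h ω‖ ≤ C / ‖ω‖ ^ 2)
    (x : EuclideanSpace ℝ (Fin 2)) :
    ‖(∫ ω : EuclideanSpace ℝ (Fin 2) in
            (WithLp.ofLp ⁻¹' (Set.univ.pi fun _ : Fin 2 => Set.Icc (-a) a) :
              Set (EuclideanSpace ℝ (Fin 2)))ᶜ,
          (Real.exp (-s * ‖ω‖ ^ 2) : ℂ) * h ω *
            Complex.exp (Complex.I * ((inner ℝ ω x : ℝ) : ℂ)))‖
      ≤ Real.pi * C * ∫ u in Set.Ioi (s * a ^ 2), Real.exp (-u) / u :=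
  gaussian_tail_truncation_bound_general s a C hs ha hC h hbound x
end
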